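/- Let v be a node of a de Bruijn graph built on a set R* of DNA strings closed under reverse complement. Then symbol a is an incoming symbol of v (i.e., the string a followed by the label of v occurs in R*, with a preceding v) if and only if the complement a^c is an outgoing symbol of the node v^{rc} labeled by the reverse complement of v's label. Moreover, the label of the node forward(v^{rc}, a^c) equals the reverse complement of the label of the node backward(v, a). -/
import Mathlib


inductive DNABase | A | C | G | T
deriving DecidableEq

def DNABase.comp : DNABase → DNABase
  | .A => .T | .T => .A | .C => .G | .G => .C

def revComp (R : List DNABase) : List DNABase := R.reverse.map DNABase.comp

def IsSubstrOf (Rs : Set (List DNABase)) (S : List DNABase) : Prop :=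
  ∃ R ∈ Rs, S <:+: R

lemma DNABase.comp_comp (a : DNABase) : a.comp.comp = a := by cases a <;> rfl

lemma revComp_revComp (R : List DNABase) : revComp (revComp R) = R := by
  simp [revComp, List.map_reverse, List.map_map, Function.comp_def, DNABase.comp_comp]

lemma revComp_infix {S R : List DNABase} (h : S <:+: R) :
    revComp S <:+: revComp R := by
  obtain ⟨s, t, rfl⟩ := h
  exact ⟨revComp t, revComp s, by simp [revComp]⟩

lemma revComp_cons (a : DNABase) (v : List DNABase) :
    revComp (a :: v) = revComp v ++ [DNABase.comp a] := by
  simp [revComp]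

lemma IsSubstrOf_revComp (Rs : Set (List DNABase))
    (hclosed : ∀ R ∈ Rs, revComp R ∈ Rs) (S : List DNABase)
    (h : IsSubstrOf Rs S) : IsSubstrOf Rs (revComp S) := by
  obtain ⟨R, hR, hSR⟩ := h
  exact ⟨revComp R, hclosed R hR, revComp_infix hSR⟩

/-- Lemma 3: for a node `v` (a `(k-1)`-length substring of a set
`Rs` closed under reverse complement), symbol `a` is an incoming symbol of `v`
(i.e. `a·v` of length `k` occurs in `Rs`) iff `comp a` is an outgoing symbol of
`v^{rc}` (i.e. `v^{rc}·(comp a)` occurs in `Rs`).  Moreover, the label of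
`forward(v^{rc}, comp a)` — namely `(v^{rc}).tail ++ [comp a]` — equals the
reverse complement of the label of `backward(v, a)` — namely `a :: v.dropLast`. -/
theorem incoming_symbols_are_outgoing_of_revComp
    (Rs : Set (List DNABase)) (k : ℕ) (hk : 2 ≤ k)
    (hclosed : ∀ R ∈ Rs, revComp R ∈ Rs)
    (v : List DNABase) (hv : v.length = k - 1) (hvsub : IsSubstrOf Rs v)
    (a : DNABase) :
    (IsSubstrOf Rs (a :: v) ↔
      IsSubstrOf Rs (revComp v ++ [DNABase.comp a])) ∧
    (revComp v).tail ++ [DNABase.comp a] = revComp (a :: v.dropLast) := by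
  constructor
  · constructor
    · intro h
      have := IsSubstrOf_revComp Rs hclosed _ h
      rwa [revComp_cons] at this
    · intro h
      have := IsSubstrOf_revComp Rs hclosed _ h
      rwa [← revComp_cons, revComp_revComp] at this
  · rw [revComp_cons]
    congr 1
    simp [revComp, ← List.map_tail, List.tail_reverse]
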